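/- For every Y ∈ ℝ and K⁺, K⁻ ∈ ℝⁿ, taking u = K⁺·Y·1{Y ≥ 0} + K⁻·Y·1{Y < 0} (so Y' = sY + P'u), the random variable m is integrable and E[m] = ρ's·Y + α⁺(K⁺)·Y·1{Y ≥ 0} + α⁻(K⁻)·Y·1{Y < 0}. -/

import Mathlib

/-!
With `u` the policy, `Y' = Y·(s + P'K)` where `K = K⁺` or `K⁻` according to the sign of `Y`, and
`m = f(Y')` for the piecewise-linear `f x = ρ'x + a⁺ max(x,0) + a⁻ min(x,0)`. Pulling out a
factor `Y ≥ 0` gives `m = Y·f(s + P'K⁺)`, whose expectation is `Y(ρ's + α⁺(K⁺))`. A factor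
`Y < 0` exchanges `max` and `min`, i.e. the slopes `a⁺` and `a⁻`, and `α⁻` is exactly `α⁺` with
the slopes exchanged. Integrability holds because `P ∈ L² ⊆ L¹` on a probability space.
-/

open MeasureTheory

/-- The random variable `m = ρ'Y' + a⁺Y'·1{Y' ≥ 0} + a⁻Y'·1{Y' < 0}`,
where `Y' = sY + P'u`. -/
noncomputable def mRV {Ω : Type*} {n : ℕ} (P : Ω → EuclideanSpace ℝ (Fin n))
    (s ρ' ap am : ℝ) (Y : ℝ) (u : EuclideanSpace ℝ (Fin n)) (ω : Ω) : ℝ :=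
  let Y' : ℝ := s * Y + inner ℝ (P ω) u
  ρ' * Y' + ap * Y' * (if 0 ≤ Y' then (1:ℝ) else 0) +
    am * Y' * (if Y' < 0 then (1:ℝ) else 0)

/-- The random variable `q = ρ'²Y'² + (2ρ'a⁺+b⁺)Y'²·1{Y' ≥ 0} + (2ρ'a⁻+b⁻)Y'²·1{Y' < 0}`,
where `Y' = sY + P'u`. -/
noncomputable def qRV {Ω : Type*} {n : ℕ} (P : Ω → EuclideanSpace ℝ (Fin n))
    (s ρ' ap am bp bm : ℝ) (Y : ℝ) (u : EuclideanSpace ℝ (Fin n)) (ω : Ω) : ℝ :=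
  let Y' : ℝ := s * Y + inner ℝ (P ω) u
  ρ' ^ 2 * Y' ^ 2 + (2 * ρ' * ap + bp) * Y' ^ 2 * (if 0 ≤ Y' then (1:ℝ) else 0) +
    (2 * ρ' * am + bm) * Y' ^ 2 * (if Y' < 0 then (1:ℝ) else 0)

/-- `α⁺(K) = ρ'E[P']K + E[a⁺(s+P'K)·1{s+P'K ≥ 0}] + E[a⁻(s+P'K)·1{s+P'K < 0}]`. -/
noncomputable def alphaPlus {Ω : Type*} [MeasurableSpace Ω] (ℙ : Measure Ω) {n : ℕ}
    (P : Ω → EuclideanSpace ℝ (Fin n)) (s ρ' ap am : ℝ)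
    (K : EuclideanSpace ℝ (Fin n)) : ℝ :=
  let pk : Ω → ℝ := fun ω => inner ℝ (P ω) K
  ρ' * (∫ ω, pk ω ∂ℙ) +
  (∫ ω, ap * (s + pk ω) * (if 0 ≤ s + pk ω then (1:ℝ) else 0) ∂ℙ) +
  (∫ ω, am * (s + pk ω) * (if s + pk ω < 0 then (1:ℝ) else 0) ∂ℙ)

/-- `α⁻(K) = ρ'E[P']K + E[a⁺(s+P'K)·1{s+P'K ≤ 0}] + E[a⁻(s+P'K)·1{s+P'K > 0}]`. -/
noncomputable def alphaMinus {Ω : Type*} [MeasurableSpace Ω] (ℙ : Measure Ω) {n : ℕ}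
    (P : Ω → EuclideanSpace ℝ (Fin n)) (s ρ' ap am : ℝ)
    (K : EuclideanSpace ℝ (Fin n)) : ℝ :=
  let pk : Ω → ℝ := fun ω => inner ℝ (P ω) K
  ρ' * (∫ ω, pk ω ∂ℙ) +
  (∫ ω, ap * (s + pk ω) * (if s + pk ω ≤ 0 then (1:ℝ) else 0) ∂ℙ) +
  (∫ ω, am * (s + pk ω) * (if 0 < s + pk ω then (1:ℝ) else 0) ∂ℙ)

/-- The piecewise-linear feedback policy `u = K⁺·Y·1{Y ≥ 0} + K⁻·Y·1{Y < 0}`. -/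
noncomputable def uPol {n : ℕ} (Y : ℝ) (Kp Km : EuclideanSpace ℝ (Fin n)) :
    EuclideanSpace ℝ (Fin n) :=
  (Y * (if 0 ≤ Y then (1:ℝ) else 0)) • Kp + (Y * (if Y < 0 then (1:ℝ) else 0)) • Km

lemma mul_mul_ite_nonneg (a x : ℝ) : a * x * (if 0 ≤ x then (1 : ℝ) else 0) = a * max x 0 := by
  split_ifs with h
  · rw [max_eq_left h, mul_one]
  · rw [max_eq_right (not_le.mp h).le, mul_zero, mul_zero]

lemma mul_mul_ite_pos (a x : ℝ) : a * x * (if 0 < x then (1 : ℝ) else 0) = a * max x 0 := by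
  split_ifs with h
  · rw [max_eq_left h.le, mul_one]
  · rw [max_eq_right (not_lt.mp h), mul_zero, mul_zero]

lemma mul_mul_ite_nonpos (a x : ℝ) : a * x * (if x ≤ 0 then (1 : ℝ) else 0) = a * min x 0 := by
  split_ifs with h
  · rw [min_eq_left h, mul_one]
  · rw [min_eq_right (not_le.mp h).le, mul_zero, mul_zero]

lemma mul_mul_ite_neg (a x : ℝ) : a * x * (if x < 0 then (1 : ℝ) else 0) = a * min x 0 := by
  split_ifs with h
  · rw [min_eq_left h.le, mul_one]
  · rw [min_eq_right (not_lt.mp h), mul_zero, mul_zero]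

/-- The response `x ↦ ρ'x + a⁺x·1{x ≥ 0} + a⁻x·1{x < 0}` of `mRV`, written with
`x·1{x ≥ 0} = max x 0` and `x·1{x < 0} = min x 0`. -/
noncomputable def pwLinear (ρ' ap am x : ℝ) : ℝ :=
  ρ' * x + ap * max x 0 + am * min x 0

section PiecewiseLinear

variable {ρ' ap am : ℝ}

lemma pwLinear_mul_of_nonneg {c : ℝ} (hc : 0 ≤ c) (x : ℝ) :
    pwLinear ρ' ap am (c * x) = c * pwLinear ρ' ap am x := by
  have hmax : max (c * x) 0 = c * max x 0 := by rw [mul_max_of_nonneg _ _ hc, mul_zero]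
  have hmin : min (c * x) 0 = c * min x 0 := by rw [mul_min_of_nonneg _ _ hc, mul_zero]
  simp only [pwLinear, hmax, hmin]
  ring

lemma pwLinear_mul_of_nonpos {c : ℝ} (hc : c ≤ 0) (x : ℝ) :
    pwLinear ρ' ap am (c * x) = c * pwLinear ρ' am ap x := by
  have hmax : max (c * x) 0 = c * min x 0 := by
    rw [← smul_eq_mul c (min x 0), smul_min_of_nonpos hc, smul_eq_mul, smul_eq_mul, mul_zero]
  have hmin : min (c * x) 0 = c * max x 0 := by
    rw [← smul_eq_mul c (max x 0), smul_max_of_nonpos hc, smul_eq_mul, smul_eq_mul, mul_zero]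
  simp only [pwLinear, hmax, hmin]
  ring

end PiecewiseLinear

section Policy

variable {n : ℕ} {Y : ℝ}

lemma uPol_of_nonneg (hY : 0 ≤ Y) (Kp Km : EuclideanSpace ℝ (Fin n)) :
    uPol Y Kp Km = Y • Kp := by
  simp [uPol, hY, not_lt.mpr hY]

lemma uPol_of_neg (hY : Y < 0) (Kp Km : EuclideanSpace ℝ (Fin n)) :
    uPol Y Kp Km = Y • Km := by
  simp [uPol, hY, not_le.mpr hY]

end Policy

universe u

section Integral

variable {α : Type u} [MeasurableSpace α] {μ : Measure α} {Z : α → ℝ} {ρ' ap am : ℝ}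

lemma Integrable.pwLinear_comp (hZ : Integrable Z μ) :
    Integrable (fun x => pwLinear ρ' ap am (Z x)) μ :=
  ((hZ.const_mul ρ').fun_add (hZ.pos_part.const_mul ap)).fun_add
    ((hZ.inf (integrable_zero _ _ _)).const_mul am)

lemma integral_pwLinear_comp (hZ : Integrable Z μ) :
    ∫ x, pwLinear ρ' ap am (Z x) ∂μ =
      ρ' * ∫ x, Z x ∂μ + ∫ x, ap * max (Z x) 0 ∂μ + ∫ x, am * min (Z x) 0 ∂μ := by
  have hpos : Integrable (fun x => ap * max (Z x) 0) μ := hZ.pos_part.const_mul ap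
  have hneg : Integrable (fun x => am * min (Z x) 0) μ :=
    (hZ.inf (integrable_zero _ _ _)).const_mul am
  rw [← integral_const_mul, ← integral_add (hZ.const_mul ρ') hpos,
    ← integral_add ((hZ.const_mul ρ').fun_add hpos) hneg]
  rfl

end Integral

section Expectation

variable {Ω : Type u} {n : ℕ} {P : Ω → EuclideanSpace ℝ (Fin n)} {s ρ' ap am : ℝ}

lemma mRV_eq_pwLinear (Y : ℝ) (u : EuclideanSpace ℝ (Fin n)) (ω : Ω) :
    mRV P s ρ' ap am Y u ω = pwLinear ρ' ap am (s * Y + inner ℝ (P ω) u) := by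
  simp only [mRV, pwLinear, mul_mul_ite_nonneg, mul_mul_ite_neg]

lemma mRV_uPol_of_nonneg {Y : ℝ} (hY : 0 ≤ Y) (Kp Km : EuclideanSpace ℝ (Fin n)) (ω : Ω) :
    mRV P s ρ' ap am Y (uPol Y Kp Km) ω = Y * pwLinear ρ' ap am (s + inner ℝ (P ω) Kp) := by
  rw [mRV_eq_pwLinear, uPol_of_nonneg hY, inner_smul_right, ← pwLinear_mul_of_nonneg hY,
    mul_add, mul_comm Y s]

lemma mRV_uPol_of_neg {Y : ℝ} (hY : Y < 0) (Kp Km : EuclideanSpace ℝ (Fin n)) (ω : Ω) :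
    mRV P s ρ' ap am Y (uPol Y Kp Km) ω = Y * pwLinear ρ' am ap (s + inner ℝ (P ω) Km) := by
  rw [mRV_eq_pwLinear, uPol_of_neg hY, inner_smul_right, ← pwLinear_mul_of_nonpos hY.le,
    mul_add, mul_comm Y s]

variable [MeasurableSpace Ω] {ℙ : Measure Ω}

lemma alphaMinus_eq_alphaPlus_swap (K : EuclideanSpace ℝ (Fin n)) :
    alphaMinus ℙ P s ρ' ap am K = alphaPlus ℙ P s ρ' am ap K := by
  simp only [alphaMinus, alphaPlus, mul_mul_ite_nonneg, mul_mul_ite_pos, mul_mul_ite_nonpos,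
    mul_mul_ite_neg]
  ring

lemma integrable_const_add_inner [IsFiniteMeasure ℙ] (hP : Integrable P ℙ)
    (K : EuclideanSpace ℝ (Fin n)) : Integrable (fun ω => s + inner ℝ (P ω) K) ℙ :=
  (integrable_const s).add (hP.inner_const K)

lemma integral_pwLinear_const_add_inner [IsProbabilityMeasure ℙ] (hP : Integrable P ℙ)
    (K : EuclideanSpace ℝ (Fin n)) :
    ∫ ω, pwLinear ρ' ap am (s + inner ℝ (P ω) K) ∂ℙ = ρ' * s + alphaPlus ℙ P s ρ' ap am K := by
  rw [integral_pwLinear_comp (integrable_const_add_inner hP K),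
    integral_add (integrable_const s) (hP.inner_const K), integral_const, probReal_univ,
    one_smul]
  simp only [alphaPlus, mul_mul_ite_nonneg, mul_mul_ite_neg]
  ring

end Expectation

theorem expectation_m_eq_general {Ω : Type*} [MeasurableSpace Ω] (ℙ : Measure Ω)
    [IsProbabilityMeasure ℙ] {n : ℕ}
    (P : Ω → EuclideanSpace ℝ (Fin n)) (hmeas : Measurable P)
    (hL2 : Integrable (fun ω => ‖P ω‖ ^ 2) ℙ)
    (s ρ' ap am : ℝ) :
    ∀ (Y : ℝ) (Kp Km : EuclideanSpace ℝ (Fin n)),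
      Integrable (fun ω => mRV P s ρ' ap am Y (uPol Y Kp Km) ω) ℙ ∧
      (∫ ω, mRV P s ρ' ap am Y (uPol Y Kp Km) ω ∂ℙ) =
        ρ' * s * Y + alphaPlus ℙ P s ρ' ap am Kp * Y * (if 0 ≤ Y then (1:ℝ) else 0) +
          alphaMinus ℙ P s ρ' ap am Km * Y * (if Y < 0 then (1:ℝ) else 0) := by
  intro Y Kp Km
  have hP : Integrable P ℙ :=
    ((memLp_two_iff_integrable_sq_norm hmeas.aestronglyMeasurable).mpr hL2).integrable
      one_le_two
  rcases le_or_gt 0 Y with hY | hY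
  · simp only [mRV_uPol_of_nonneg hY, integral_const_mul,
      integral_pwLinear_const_add_inner hP, if_pos hY, if_neg (not_lt.mpr hY)]
    exact ⟨(Integrable.pwLinear_comp (integrable_const_add_inner hP Kp)).const_mul Y, by ring⟩
  · simp only [mRV_uPol_of_neg hY, integral_const_mul, integral_pwLinear_const_add_inner hP,
      alphaMinus_eq_alphaPlus_swap, if_pos hY, if_neg (not_le.mpr hY)]
    exact ⟨(Integrable.pwLinear_comp (integrable_const_add_inner hP Km)).const_mul Y, by ring⟩

/-- For every `Y ∈ ℝ` and `K⁺, K⁻ ∈ ℝⁿ`, with `u = K⁺·Y·1{Y ≥ 0} + K⁻·Y·1{Y < 0}`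
(so `Y' = sY + P'u`), the random variable `m` is integrable and
`E[m] = ρ's·Y + α⁺(K⁺)·Y·1{Y ≥ 0} + α⁻(K⁻)·Y·1{Y < 0}`. -/
theorem expectation_m_eq {Ω : Type*} [MeasurableSpace Ω] (ℙ : Measure Ω)
    [IsProbabilityMeasure ℙ] {n : ℕ} (hn : 1 ≤ n)
    (P : Ω → EuclideanSpace ℝ (Fin n)) (hmeas : Measurable P)
    (hL2 : Integrable (fun ω => ‖P ω‖ ^ 2) ℙ)
    (s ρ' ap am : ℝ) (hs : 0 < s) (hρ : 0 < ρ') :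
    ∀ (Y : ℝ) (Kp Km : EuclideanSpace ℝ (Fin n)),
      Integrable (fun ω => mRV P s ρ' ap am Y (uPol Y Kp Km) ω) ℙ ∧
      (∫ ω, mRV P s ρ' ap am Y (uPol Y Kp Km) ω ∂ℙ) =
        ρ' * s * Y + alphaPlus ℙ P s ρ' ap am Kp * Y * (if 0 ≤ Y then (1:ℝ) else 0) +
          alphaMinus ℙ P s ρ' ap am Km * Y * (if Y < 0 then (1:ℝ) else 0) :=
  expectation_m_eq_general ℙ P hmeas hL2 s ρ' ap am
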